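/- Under Assumption 1, let the chain start from x₀ distributed according to μ and set σ = sup{l ≥ 0 : x_l ∈ A and l < τ_B}, where τ_B is the first hitting time of B. Then for every k ≥ 0 the following hold: (i) for all x, y ∈ V⁻ with P(x_k = y, σ ≥ k) > 0, P(x_{k+1} = x, σ ≥ k+1 | x_k = y, σ ≥ k) = p(x|y)(1−q(x))/(1−q(y)); (ii) for all y ∈ A with P(x_k = y, σ ≥ k) > 0, P(σ = k | x_k = y, σ ≥ k) = Σ_{z∈V} p(z|y) q(z). In other words, the ensemble of nonreactive segments (x₀, …, x_σ) is generated by the Markov chain on V⁻ ∪ {0} with transition matrix p̄ and initial distribution μ. -/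

import Mathlib

open scoped ENNReal

-- `pathProb p x l` : probability that the chain with transition matrix `p` follows the
-- finite path `x :: l` (here `p x y` is the probability `p(y|x)` of jumping from `x` to `y`).
noncomputable def pathProb {V : Type*} (p : V → V → ℝ) : V → List V → ℝ≥0∞
  | _, [] => 1
  | x, y :: ys => ENNReal.ofReal (p x y) * pathProb p y ys

-- The finite path lies outside `S ∪ T` at all nodes except its last one, which lies in `S`;
-- such paths realize exactly the event `τ_S < τ_T`.
def HitsFirst {V : Type*} (S T : Finset V) : List V → Prop
  | [] => False
  | [x] => x ∈ S
  | x :: y :: ys => x ∉ S ∧ x ∉ T ∧ HitsFirst S T (y :: ys)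

-- `hitProb p S T x` : the probability `P(τ_{S,x} < τ_{T,x})` that the chain started at `x`
-- hits `S` strictly before `T`, written as the sum over all first-passage paths to `S`.
open Classical in
noncomputable def hitProb {V : Type*} (p : V → V → ℝ) (S T : Finset V) (x : V) : ℝ≥0∞ :=
  ∑' l : List V, if HitsFirst S T (x :: l) then pathProb p x l else 0

-- `S` (with `S = A` or `S = B`) is reachable from `x` : there is a finite path of positive
-- transition probabilities from `x` to `S` whose interior nodes avoid `A ∪ B`.
def ReachableFrom {V : Type*} [DecidableEq V] (p : V → V → ℝ) (A B S : Finset V) (x : V) :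
    Prop :=
  ∃ (k : ℕ) (c : ℕ → V), c 0 = x ∧ c k ∈ S ∧
    (∀ l, 1 ≤ l → l ≤ k - 1 → c l ∉ A ∪ B) ∧
    ∀ l, l < k → 0 < p (c l) (c (l + 1))

-- Assumption 1 of the paper.
def Assumption1 {V : Type*} [Fintype V] [DecidableEq V] (p : V → V → ℝ) (A B : Finset V) :
    Prop :=
  ((A ∪ B)ᶜ : Finset V).Nonempty ∧
  (∀ x ∈ (A ∪ B)ᶜ, ReachableFrom p A B A x ∨ ReachableFrom p A B B x) ∧
  ∀ x ∈ A, ReachableFrom p A B B x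

open Classical

-- Probability of the finite trajectory segment `c = (x_0, …, x_k)` when the initial state
-- `x_0` is distributed according to `μ`.
noncomputable def iniProb {V : Type*} (p : V → V → ℝ) (μ : V → ℝ) : List V → ℝ≥0∞
  | [] => 0
  | x :: xs => ENNReal.ofReal (μ x) * pathProb p x xs

-- Probability `P(x_0 ∉ B, …, x_k ∉ B, x_k = y)` of the cylinder event that the chain,
-- started from `μ`, avoids `B` up to time `k` and sits at `y` at time `k`.
noncomputable def prefixProb {V : Type*} (p : V → V → ℝ) (B : Finset V) (μ : V → ℝ)
    (k : ℕ) (y : V) : ℝ≥0∞ :=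
  ∑' c : List V,
    if c.length = k + 1 ∧ c.getLast? = some y ∧ ∀ z ∈ c, z ∉ B then iniProb p μ c else 0

-- Probability of the cylinder event that the chain, started from `μ`, avoids `B` up to time
-- `k + 1`, sits at `y` at time `k` and at `x` at time `k + 1`.
noncomputable def prefixProb2 {V : Type*} (p : V → V → ℝ) (B : Finset V) (μ : V → ℝ)
    (k : ℕ) (y x : V) : ℝ≥0∞ :=
  ∑' c : List V,
    if c.length = k + 2 ∧ (∃ c' : List V, c = c' ++ [y, x]) ∧ ∀ z ∈ c, z ∉ B then
      iniProb p μ c else 0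

-- `P(x_k = y, σ ≥ k)` : the chain avoids `B` up to time `k`, sits at `y` at time `k`, and
-- afterwards visits `A` before hitting `B` (so that the last hitting time `σ` of `A` before
-- `τ_B` satisfies `σ ≥ k`).
noncomputable def probAtSigmaGe {V : Type*} (p : V → V → ℝ) (A B : Finset V) (μ : V → ℝ)
    (k : ℕ) (y : V) : ℝ≥0∞ :=
  prefixProb p B μ k y * hitProb p A B y

-- `P(x_{k+1} = x, x_k = y, σ ≥ k + 1)`.
noncomputable def probStepSigmaGe {V : Type*} (p : V → V → ℝ) (A B : Finset V) (μ : V → ℝ)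
    (k : ℕ) (y x : V) : ℝ≥0∞ :=
  prefixProb2 p B μ k y x * hitProb p A B x

-- `P(x_k = y, σ = k)` for `y ∈ A` : the chain avoids `B` up to time `k`, sits at `y ∈ A` at
-- time `k`, and after the next jump hits `B` before returning to `A`.
noncomputable def probAtSigmaEq {V : Type*} [Fintype V] (p : V → V → ℝ) (A B : Finset V)
    (μ : V → ℝ) (k : ℕ) (y : V) : ℝ≥0∞ :=
  prefixProb p B μ k y * ∑ z, ENNReal.ofReal (p y z) * hitProb p B A z

/-! By the Markov property the probability of the prefix `(x_0, …, x_k)` factors out of both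
`P(x_{k+1} = x, x_k = y, σ ≥ k + 1)` and `P(x_k = y, σ ≥ k)`, leaving `p(x|y) h(x) / h(y)`, where
`h` is the probability of reaching `A` before `B`. Under Assumption 1 the chain is absorbed in
`A ∪ B` almost surely, so `h = 1 - q`: the absorption probability is at most `1`, harmonic off
`A ∪ B` and equal to `1` on `A ∪ B`, and by the minimum principle its minimum value is carried
along a path of positive probability into `A ∪ B`. -/

section Paths

variable {V : Type*}

@[simp] lemma hitsFirst_nil (S T : Finset V) : ¬ HitsFirst S T ([] : List V) := id

@[simp] lemma hitsFirst_singleton (S T : Finset V) (x : V) : HitsFirst S T [x] ↔ x ∈ S :=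
  Iff.rfl

@[simp] lemma hitsFirst_cons_cons (S T : Finset V) (x y : V) (l : List V) :
    HitsFirst S T (x :: y :: l) ↔ x ∉ S ∧ x ∉ T ∧ HitsFirst S T (y :: l) :=
  Iff.rfl

@[simp] lemma pathProb_nil (p : V → V → ℝ) (x : V) : pathProb p x [] = 1 := rfl

@[simp] lemma pathProb_cons (p : V → V → ℝ) (x y : V) (l : List V) :
    pathProb p x (y :: l) = ENNReal.ofReal (p x y) * pathProb p y l := rfl

lemma pathProb_ne_top (p : V → V → ℝ) (x : V) (l : List V) : pathProb p x l ≠ ⊤ := by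
  induction l generalizing x with
  | nil => simp
  | cons y l ih => exact ENNReal.mul_ne_top ENNReal.ofReal_ne_top (ih y)

lemma pathProb_append_singleton (p : V → V → ℝ) {x y : V} {l : List V}
    (hy : (x :: l).getLast? = some y) (z : V) :
    pathProb p x (l ++ [z]) = pathProb p x l * ENNReal.ofReal (p y z) := by
  induction l generalizing x with
  | nil =>
    obtain rfl : x = y := by simpa using hy
    simp [mul_comm]
  | cons w l ih =>
    rw [List.getLast?_cons_cons] at hy
    rw [List.cons_append, pathProb_cons, pathProb_cons, ih hy, mul_assoc]

lemma tsum_list_eq_sum_tsum_cons [Fintype V] (f : List V → ℝ≥0∞) (hf : f [] = 0) :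
    ∑' l, f l = ∑ z, ∑' l, f (z :: l) := by
  have hinj : Function.Injective fun q : V × List V => q.1 :: q.2 := by
    rintro ⟨a, l⟩ ⟨b, m⟩ h
    simp_all
  have hsupp : Function.support f ⊆ Set.range fun q : V × List V => q.1 :: q.2 := by
    rintro (_ | ⟨a, l⟩) hl
    · exact absurd hf hl
    · exact ⟨(a, l), rfl⟩
  rw [← hinj.tsum_eq hsupp, ENNReal.tsum_prod', tsum_fintype]

end Paths

section Committor

variable {V : Type*} {p : V → V → ℝ}

lemma hitProb_eq_one_of_mem (S T : Finset V) {x : V} (hx : x ∈ S) :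
    hitProb p S T x = 1 := by
  rw [hitProb, tsum_eq_single []]
  · simp [hx]
  · rintro (_ | ⟨z, l⟩) hl
    · exact absurd rfl hl
    · simp [hx]

lemma hitProb_eq_sum_mul_hitProb [Fintype V] {S T : Finset V} {x : V}
    (hxS : x ∉ S) (hxT : x ∉ T) :
    hitProb p S T x = ∑ z, ENNReal.ofReal (p x z) * hitProb p S T z := by
  rw [hitProb, tsum_list_eq_sum_tsum_cons _ (by simp [hxS])]
  refine Finset.sum_congr rfl fun z _ => ?_
  rw [hitProb, ← ENNReal.tsum_mul_left]
  refine tsum_congr fun l => ?_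
  by_cases h : HitsFirst S T (z :: l) <;> simp [h, hxS, hxT]

noncomputable def hitProbWithin (p : V → V → ℝ) (S T : Finset V) (n : ℕ) (x : V) : ℝ≥0∞ :=
  ∑' l : List V, if HitsFirst S T (x :: l) ∧ l.length < n then pathProb p x l else 0

lemma hitProbWithin_le_hitProb (S T : Finset V) (n : ℕ) (x : V) :
    hitProbWithin p S T n x ≤ hitProb p S T x :=
  ENNReal.tsum_le_tsum fun l => by split_ifs <;> simp_all

lemma hitProbWithin_succ_le [Fintype V] {S T : Finset V} {x : V} (hx : x ∉ S) (n : ℕ) :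
    hitProbWithin p S T (n + 1) x ≤ ∑ z, ENNReal.ofReal (p x z) * hitProbWithin p S T n z := by
  rw [hitProbWithin, tsum_list_eq_sum_tsum_cons _ (by simp [hx])]
  refine Finset.sum_le_sum fun z _ => ?_
  rw [hitProbWithin, ← ENNReal.tsum_mul_left]
  refine ENNReal.tsum_le_tsum fun l => ?_
  split_ifs <;> simp_all

lemma hitProbWithin_le_one [Fintype V] (hp0 : ∀ x y, 0 ≤ p x y) (hp1 : ∀ x, ∑ y, p x y = 1)
    (S T : Finset V) (n : ℕ) (x : V) : hitProbWithin p S T n x ≤ 1 := by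
  induction n generalizing x with
  | zero => simp [hitProbWithin]
  | succ n ih =>
    by_cases hx : x ∈ S
    · exact (hitProbWithin_le_hitProb S T _ x).trans (hitProb_eq_one_of_mem S T hx).le
    calc hitProbWithin p S T (n + 1) x
        ≤ ∑ z, ENNReal.ofReal (p x z) * hitProbWithin p S T n z := hitProbWithin_succ_le hx n
      _ ≤ ∑ z, ENNReal.ofReal (p x z) :=
        Finset.sum_le_sum fun z _ => mul_le_of_le_one_right' (ih z)
      _ = 1 := by
        rw [← ENNReal.ofReal_sum_of_nonneg fun z _ => hp0 x z, hp1 x, ENNReal.ofReal_one]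

lemma hitProb_le_one [Fintype V] (hp0 : ∀ x y, 0 ≤ p x y) (hp1 : ∀ x, ∑ y, p x y = 1)
    (S T : Finset V) (x : V) : hitProb p S T x ≤ 1 := by
  rw [hitProb, ENNReal.tsum_eq_iSup_sum]
  refine iSup_le fun s => ?_
  set n := s.sup List.length + 1
  calc ∑ l ∈ s, (if HitsFirst S T (x :: l) then pathProb p x l else 0)
      = ∑ l ∈ s, (if HitsFirst S T (x :: l) ∧ l.length < n then pathProb p x l else 0) :=
        Finset.sum_congr rfl fun l hl => by
          simp [show l.length < n from Nat.lt_succ_of_le (Finset.le_sup hl)]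
    _ ≤ hitProbWithin p S T n x := ENNReal.sum_le_tsum s
    _ ≤ 1 := hitProbWithin_le_one hp0 hp1 S T n x

lemma hitProb_ne_top [Fintype V] (hp0 : ∀ x y, 0 ≤ p x y) (hp1 : ∀ x, ∑ y, p x y = 1)
    (S T : Finset V) (x : V) : hitProb p S T x ≠ ⊤ :=
  ne_top_of_le_ne_top ENNReal.one_ne_top (hitProb_le_one hp0 hp1 S T x)

lemma hitsFirst_union_empty_iff [DecidableEq V] {A B : Finset V} :
    ∀ l : List V, HitsFirst (A ∪ B) ∅ l ↔ HitsFirst A B l ∨ HitsFirst B A l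
  | [] => by simp
  | [x] => by simp
  | x :: y :: l => by
    simp only [hitsFirst_cons_cons, hitsFirst_union_empty_iff (y :: l), Finset.mem_union,
      Finset.notMem_empty, not_false_eq_true]
    tauto

lemma not_hitsFirst_and_hitsFirst {A B : Finset V} (hAB : Disjoint A B) :
    ∀ l : List V, ¬ (HitsFirst A B l ∧ HitsFirst B A l)
  | [] => by simp
  | [x] => fun h => Finset.disjoint_left.mp hAB h.1 h.2
  | x :: y :: l => fun h => not_hitsFirst_and_hitsFirst hAB (y :: l) ⟨h.1.2.2, h.2.2.2⟩

lemma hitProb_union_empty [DecidableEq V] {A B : Finset V} (hAB : Disjoint A B) (x : V) :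
    hitProb p (A ∪ B) ∅ x = hitProb p A B x + hitProb p B A x := by
  simp only [hitProb]
  rw [← ENNReal.tsum_add]
  refine tsum_congr fun l => ?_
  have hex := not_hitsFirst_and_hitsFirst hAB (x :: l)
  by_cases hA : HitsFirst A B (x :: l) <;> by_cases hB : HitsFirst B A (x :: l) <;>
    simp_all [hitsFirst_union_empty_iff]

lemma eq_of_sum_mul_eq_of_forall_le {ι : Type*} [Fintype ι] {w f : ι → ℝ} {a : ℝ}
    (hw0 : ∀ i, 0 ≤ w i) (hw1 : ∑ i, w i = 1) (ha : ∀ i, a ≤ f i) (hsum : ∑ i, w i * f i = a)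
    {i : ι} (hi : 0 < w i) : f i = a := by
  have hzero : ∑ j, w j * (f j - a) = 0 := by
    simp only [mul_sub, Finset.sum_sub_distrib, ← Finset.sum_mul, hw1, hsum, one_mul, sub_self]
  have hterm := (Finset.sum_eq_zero_iff_of_nonneg fun j _ =>
    mul_nonneg (hw0 j) (sub_nonneg.2 (ha j))).1 hzero i (Finset.mem_univ i)
  rcases mul_eq_zero.1 hterm with h | h
  · exact absurd h hi.ne'
  · linarith

lemma ReachableFrom.union_empty [DecidableEq V] {A B S : Finset V} {x : V}
    (h : ReachableFrom p A B S x) (hS : S ⊆ A ∪ B) : ReachableFrom p (A ∪ B) ∅ (A ∪ B) x := by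
  obtain ⟨k, c, hc0, hck, hout, hpos⟩ := h
  exact ⟨k, c, hc0, hS hck, by simpa using hout, hpos⟩

/-- Minimum principle: a function harmonic off `C` keeps its minimal value along a path of
positive probability from a minimiser into `C`. -/
lemma ReachableFrom.exists_mem_eq_of_forall_le [Fintype V] [DecidableEq V]
    (hp0 : ∀ x y, 0 ≤ p x y) (hp1 : ∀ x, ∑ y, p x y = 1) {C : Finset V} {f : V → ℝ}
    (hf : ∀ x ∉ C, ∑ z, p x z * f z = f x) {x₀ : V} (hreach : ReachableFrom p C ∅ C x₀)
    (hx₀ : x₀ ∉ C) (hmin : ∀ z, f x₀ ≤ f z) : ∃ c ∈ C, f c = f x₀ := by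
  obtain ⟨k, c, hc0, hck, hint, hpos⟩ := hreach
  have hout : ∀ l < k, c l ∉ C := by
    rintro (_ | l) hl
    · rwa [hc0]
    · simpa using hint (l + 1) (by omega) (by omega)
  have hconst : ∀ l ≤ k, f (c l) = f x₀ := by
    intro l
    induction l with
    | zero => exact fun _ => by rw [hc0]
    | succ l ih =>
      intro hl
      have hcl := ih (by omega)
      rw [← hcl]
      exact eq_of_sum_mul_eq_of_forall_le (hp0 _) (hp1 _) (fun z => hcl ▸ hmin z)
        (hf _ (hout l (by omega))) (hpos l (by omega))
  exact ⟨c k, hck, hconst k le_rfl⟩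

lemma hitProb_empty_eq_one [Fintype V] [DecidableEq V] (hp0 : ∀ x y, 0 ≤ p x y)
    (hp1 : ∀ x, ∑ y, p x y = 1) {C : Finset V} (hreach : ∀ x ∉ C, ReachableFrom p C ∅ C x)
    (x : V) : hitProb p C ∅ x = 1 := by
  let s : V → ℝ := fun z => (hitProb p C ∅ z).toReal
  have hharm : ∀ z ∉ C, ∑ w, p z w * s w = s z := by
    intro z hz
    show ∑ w, p z w * (hitProb p C ∅ w).toReal = (hitProb p C ∅ z).toReal
    rw [hitProb_eq_sum_mul_hitProb hz (Finset.notMem_empty z), ENNReal.toReal_sum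
      fun w _ => ENNReal.mul_ne_top ENNReal.ofReal_ne_top (hitProb_ne_top hp0 hp1 C ∅ w)]
    simp [ENNReal.toReal_ofReal (hp0 z _)]
  have : Nonempty V := ⟨x⟩
  obtain ⟨x₀, hmin⟩ := Finite.exists_min s
  obtain ⟨c, hc, hcx₀⟩ : ∃ c ∈ C, s c = s x₀ := by
    by_cases hx₀ : x₀ ∈ C
    · exact ⟨x₀, hx₀, rfl⟩
    · exact (hreach x₀ hx₀).exists_mem_eq_of_forall_le hp0 hp1 hharm hx₀ hmin
  have hsx : 1 ≤ s x := by
    simpa [← hcx₀, s, hitProb_eq_one_of_mem C ∅ hc] using hmin x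
  refine le_antisymm (hitProb_le_one hp0 hp1 C ∅ x) ?_
  simpa using ENNReal.ofReal_le_of_le_toReal hsx

lemma hitProb_add_hitProb_eq_one [Fintype V] [DecidableEq V] {A B : Finset V}
    (hAB : Disjoint A B) (hp0 : ∀ x y, 0 ≤ p x y) (hp1 : ∀ x, ∑ y, p x y = 1)
    (hreach : ∀ x ∉ A ∪ B, ReachableFrom p A B A x ∨ ReachableFrom p A B B x) (x : V) :
    hitProb p A B x + hitProb p B A x = 1 := by
  rw [← hitProb_union_empty hAB]
  refine hitProb_empty_eq_one hp0 hp1 (fun z hz => ?_) x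
  rcases hreach z hz with h | h
  exacts [h.union_empty Finset.subset_union_left, h.union_empty Finset.subset_union_right]

end Committor

section Prefix

variable {V : Type*} (p : V → V → ℝ) (μ : V → ℝ)

lemma iniProb_ne_top (c : List V) : iniProb p μ c ≠ ⊤ := by
  cases c with
  | nil => simp [iniProb]
  | cons x l => exact ENNReal.mul_ne_top ENNReal.ofReal_ne_top (pathProb_ne_top p x l)

lemma iniProb_append_singleton {d : List V} {y : V} (hy : d.getLast? = some y) (x : V) :
    iniProb p μ (d ++ [x]) = iniProb p μ d * ENNReal.ofReal (p y x) := by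
  cases d with
  | nil => simp at hy
  | cons w d => rw [List.cons_append, iniProb, iniProb, pathProb_append_singleton p hy, mul_assoc]

lemma exists_append_pair_iff {d : List V} {x y : V} :
    (∃ c, d ++ [x] = c ++ [y, x]) ↔ d.getLast? = some y := by
  constructor
  · rintro ⟨c, hc⟩
    obtain rfl : d = c ++ [y] := List.append_left_injective [x] (by simpa using hc)
    simp
  · intro hy
    exact ⟨d.dropLast, by rw [← List.dropLast_append_getLast? y hy]; simp⟩

lemma prefixProb2_eq_prefixProb_mul (B : Finset V) (k : ℕ) (y : V) {x : V} (hx : x ∉ B) :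
    prefixProb2 p B μ k y x = prefixProb p B μ k y * ENNReal.ofReal (p y x) := by
  have hinj : Function.Injective fun d : List V => d ++ [x] := List.append_left_injective [x]
  have hsupp : Function.support (fun c : List V =>
      if c.length = k + 2 ∧ (∃ c', c = c' ++ [y, x]) ∧ ∀ z ∈ c, z ∉ B then iniProb p μ c
      else 0) ⊆ Set.range fun d : List V => d ++ [x] := by
    intro c hc
    obtain ⟨⟨-, ⟨c', rfl⟩, -⟩, -⟩ := ite_ne_right_iff.1 hc
    exact ⟨c' ++ [y], by simp⟩
  have hcond : ∀ d : List V, ((d ++ [x]).length = k + 2 ∧ (∃ c, d ++ [x] = c ++ [y, x]) ∧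
      ∀ z ∈ d ++ [x], z ∉ B) ↔ d.length = k + 1 ∧ d.getLast? = some y ∧ ∀ z ∈ d, z ∉ B := by
    intro d
    simp [exists_append_pair_iff, or_imp, forall_and, hx]
  rw [prefixProb2, prefixProb, ← ENNReal.tsum_mul_right, ← hinj.tsum_eq hsupp]
  refine tsum_congr fun d => ?_
  simp only [hcond]
  split_ifs with h
  · exact iniProb_append_singleton p μ h.2.1 x
  · rw [zero_mul]

lemma prefixProb_ne_top [Finite V] (B : Finset V) (k : ℕ) (y : V) :
    prefixProb p B μ k y ≠ ⊤ := by
  have hfin := List.finite_length_eq V (k + 1)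
  rw [prefixProb, tsum_eq_sum' (s := hfin.toFinset)]
  · refine ENNReal.sum_ne_top.2 fun c _ => ?_
    split_ifs
    exacts [iniProb_ne_top p μ c, ENNReal.zero_ne_top]
  · intro c hc
    simpa using (ite_ne_right_iff.1 hc).1.1

end Prefix

theorem nonreactive_segments_generated_by_pbar_general {V : Type*} [Fintype V] [DecidableEq V]
    (p : V → V → ℝ) (A B : Finset V)
    (hAB : Disjoint A B)
    (hp0 : ∀ x y, 0 ≤ p x y) (hp1 : ∀ x, ∑ y, p x y = 1)
    (h1 : Assumption1 p A B)
    (μ : V → ℝ) :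
    (∀ (k : ℕ) (x y : V), hitProb p B A x < 1 → hitProb p B A y < 1 →
        0 < probAtSigmaGe p A B μ k y →
        probStepSigmaGe p A B μ k y x / probAtSigmaGe p A B μ k y
          = ENNReal.ofReal (p y x) * (1 - hitProb p B A x) / (1 - hitProb p B A y)) ∧
    (∀ (k : ℕ) (y : V), y ∈ A →
        0 < probAtSigmaGe p A B μ k y →
        probAtSigmaEq p A B μ k y / probAtSigmaGe p A B μ k y
          = ∑ z, ENNReal.ofReal (p y z) * hitProb p B A z) := by
  have hcommittor : ∀ x, hitProb p A B x = 1 - hitProb p B A x := fun x =>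
    ENNReal.eq_sub_of_add_eq (hitProb_ne_top hp0 hp1 B A x) <|
      hitProb_add_hitProb_eq_one hAB hp0 hp1 (fun z hz => h1.2.1 z (Finset.mem_compl.2 hz)) x
  have hprefix : ∀ k y, 0 < probAtSigmaGe p A B μ k y → prefixProb p B μ k y ≠ 0 :=
    fun k y hpos => left_ne_zero_of_mul hpos.ne'
  refine ⟨fun k x y hqx _ hpos => ?_, fun k y hy hpos => ?_⟩
  · have hxB : x ∉ B := fun hx => hqx.ne (hitProb_eq_one_of_mem B A hx)
    rw [probStepSigmaGe, probAtSigmaGe, prefixProb2_eq_prefixProb_mul p μ B k y hxB, mul_assoc,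
      ENNReal.mul_div_mul_left _ _ (hprefix k y hpos) (prefixProb_ne_top p μ B k y),
      hcommittor, hcommittor]
  · rw [probAtSigmaEq, probAtSigmaGe, hitProb_eq_one_of_mem A B hy, mul_one, mul_comm,
      ENNReal.mul_div_cancel_right (hprefix k y hpos) (prefixProb_ne_top p μ B k y)]

/-- Under Assumption 1, let the chain start from `x₀` distributed according
to `μ` (a probability distribution on `A`) and let `σ` be the last hitting time of `A`
strictly before `τ_B`.  Then for every `k ≥ 0`:
(i) for all `x, y ∈ V⁻ = {q < 1}` (where `q = hitProb p B A` is the committor) with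
`P(x_k = y, σ ≥ k) > 0`, the conditional probability satisfies
`P(x_{k+1} = x, σ ≥ k+1 | x_k = y, σ ≥ k) = p(x|y)·(1 − q(x))/(1 − q(y)) = p̄(x|y)`;
(ii) for all `y ∈ A` with `P(x_k = y, σ ≥ k) > 0`,
`P(σ = k | x_k = y, σ ≥ k) = Σ_{z∈V} p(z|y) q(z) = p̄(0|y)`.
In other words, the ensemble of nonreactive segments `(x₀, …, x_σ)` is generated by the
Markov chain on `V⁻ ∪ {0}` with transition matrix `p̄` and initial distribution `μ`. -/
theorem nonreactive_segments_generated_by_pbar {V : Type*} [Fintype V] [DecidableEq V]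
    (p : V → V → ℝ) (A B : Finset V)
    (hAB : Disjoint A B) (hA : A.Nonempty) (hB : B.Nonempty)
    (hp0 : ∀ x y, 0 ≤ p x y) (hp1 : ∀ x, ∑ y, p x y = 1)
    (h1 : Assumption1 p A B)
    (μ : V → ℝ) (hμ0 : ∀ x, 0 ≤ μ x) (hμA : ∀ x ∉ A, μ x = 0) (hμ1 : ∑ x ∈ A, μ x = 1) :
    (∀ (k : ℕ) (x y : V), hitProb p B A x < 1 → hitProb p B A y < 1 →
        0 < probAtSigmaGe p A B μ k y →
        probStepSigmaGe p A B μ k y x / probAtSigmaGe p A B μ k y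
          = ENNReal.ofReal (p y x) * (1 - hitProb p B A x) / (1 - hitProb p B A y)) ∧
    (∀ (k : ℕ) (y : V), y ∈ A →
        0 < probAtSigmaGe p A B μ k y →
        probAtSigmaEq p A B μ k y / probAtSigmaGe p A B μ k y
          = ∑ z, ENNReal.ofReal (p y z) * hitProb p B A z) :=
  nonreactive_segments_generated_by_pbar_general p A B hAB hp0 hp1 h1 μ
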